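/- Let w be a word, let y be a nonempty word, and let s be a position such that y ++ y occurs in w at position s. Then there exist a maximal local power (p, θ, e) of w and natural numbers i ≥ 0 and j ≥ 1 such that y = θ^j, s = p + i·|θ|, and i + 2j ≤ e. -/

import Mathlib

/-!
Write `y = θ ^ j` with `θ` primitive, so that `y ++ y = θ ^ (2 j)` occurs at `s`. Extend this
run of `θ`'s to the left, one copy of `θ` at a time, as far as possible, say by `i` copies, and
then to the right as far as possible; both processes stop because `w` is finite. The resulting
run `θ ^ e`, starting at `p = s - i |θ|`, is a maximal local power, and `i + 2 j ≤ e`.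
-/

/-- `wpow u k` is the `k`-fold concatenation of the word `u` with itself. -/
def wpow {α : Type*} (u : List α) : ℕ → List α
  | 0 => []
  | k + 1 => u ++ wpow u k

/-- `u` occurs in `w` at position `j` (0-indexed). -/
def Occurs {α : Type*} (u w : List α) (j : ℕ) : Prop :=
  u <+: w.drop j

/-- A nonempty word is primitive if it is not a proper power. -/
def Primitive {α : Type*} (p : List α) : Prop :=
  p ≠ [] ∧ ∀ (u : List α) (k : ℕ), 2 ≤ k → p ≠ wpow u k

/-- `(p, θ, e)` is a maximal local power of `w`. -/
def MaxLocalPower {α : Type*} (w : List α) (p : ℕ) (θ : List α) (e : ℕ) : Prop :=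
  Primitive θ ∧ 2 ≤ e ∧ Occurs (wpow θ e) w p ∧
    ¬ θ <:+ w.take p ∧ ¬ Occurs θ w (p + e * θ.length)

section Words

variable {α : Type*}

@[simp]
lemma wpow_zero (u : List α) : wpow u 0 = [] := rfl

@[simp]
lemma wpow_succ (u : List α) (k : ℕ) : wpow u (k + 1) = u ++ wpow u k := rfl

@[simp]
lemma wpow_one (u : List α) : wpow u 1 = u := List.append_nil u

@[simp]
lemma length_wpow (u : List α) (k : ℕ) : (wpow u k).length = k * u.length := by
  induction k with
  | zero => simp
  | succ k ih => simp [ih, Nat.succ_mul, Nat.add_comm]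

@[simp]
lemma nil_wpow (k : ℕ) : wpow ([] : List α) k = [] := by
  induction k <;> simp [*]

lemma wpow_add (u : List α) (m n : ℕ) : wpow u (m + n) = wpow u m ++ wpow u n := by
  induction m with
  | zero => simp
  | succ m ih => simp [Nat.succ_add, ih]

lemma wpow_mul (u : List α) (m k : ℕ) : wpow u (m * k) = wpow (wpow u m) k := by
  induction k with
  | zero => simp
  | succ k ih => rw [Nat.mul_succ, Nat.add_comm, wpow_add, ih, wpow_succ]

lemma exists_primitive_wpow_eq {y : List α} (hy : y ≠ []) :
    ∃ θ j, Primitive θ ∧ 1 ≤ j ∧ y = wpow θ j := by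
  induction h : y.length using Nat.strong_induction_on generalizing y with
  | _ n ih =>
    by_cases hprim : Primitive y
    · exact ⟨y, 1, hprim, le_rfl, (wpow_one y).symm⟩
    obtain ⟨u, k, hk, rfl⟩ : ∃ u k, 2 ≤ k ∧ y = wpow u k := by
      simpa [Primitive, hy] using hprim
    have hu : u ≠ [] := by rintro rfl; simp at hy
    have hlen : u.length < n := by
      have := List.length_pos_iff.mpr hu
      rw [← h, length_wpow]; nlinarith
    obtain ⟨θ, m, hθ, hm, rfl⟩ := ih _ hlen hu rfl
    exact ⟨θ, m * k, hθ, Nat.one_le_iff_ne_zero.mpr (by positivity), (wpow_mul θ m k).symm⟩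

namespace Occurs

variable {u x w : List α} {p : ℕ}

lemma length_le (h : Occurs u w p) : u.length ≤ w.length - p := by
  simpa using List.IsPrefix.length_le h

lemma append (hx : Occurs x w p) (hu : Occurs u w (p + x.length)) : Occurs (x ++ u) w p := by
  obtain ⟨t, ht⟩ := hx
  obtain ⟨r, hr⟩ := hu
  have hdrop : w.drop (p + x.length) = t := by
    rw [← List.drop_drop, ← ht, List.drop_left]
  exact ⟨r, by rw [List.append_assoc, ← ht, hr, hdrop]⟩

lemma append_left (hp : p ≤ w.length) (hsuf : u <:+ w.take p) (hx : Occurs x w p) :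
    Occurs (u ++ x) w (p - u.length) := by
  obtain ⟨t, ht⟩ := hsuf
  have hlen : t.length = p - u.length := by
    have := congrArg List.length ht
    simp only [List.length_append, List.length_take] at this
    omega
  have hw : w.drop (p - u.length) = u ++ w.drop p := by
    conv_lhs => rw [← List.take_append_drop p w, ← ht]
    rw [List.append_assoc, ← hlen, List.drop_left]
  obtain ⟨r, hr⟩ := hx
  exact ⟨r, by rw [hw, List.append_assoc, hr]⟩

end Occurs

lemma exists_occurs_wpow_not_isSuffix_take {θ w : List α} (hθ : θ ≠ []) {n s : ℕ}
    (hs : s ≤ w.length) (h : Occurs (wpow θ n) w s) :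
    ∃ a, a * θ.length ≤ s ∧ Occurs (wpow θ (a + n)) w (s - a * θ.length) ∧
      ¬ θ <:+ w.take (s - a * θ.length) := by
  by_contra! hext
  have hall : ∀ a, a * θ.length ≤ s ∧ Occurs (wpow θ (a + n)) w (s - a * θ.length) := by
    intro a
    induction a with
    | zero => simpa using h
    | succ a ih =>
      have hsuf := hext a ih.1 ih.2
      have hθle : θ.length ≤ s - a * θ.length := (by simpa using hsuf.length_le : _ ∧ _).1
      have hocc := ih.2.append_left (by omega) hsuf
      refine ⟨by rw [Nat.succ_mul]; omega, ?_⟩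
      rwa [Nat.succ_add, wpow_succ, Nat.succ_mul, ← Nat.sub_sub]
  have := (hall (s + 1)).1
  have := List.length_pos_iff.mpr hθ
  nlinarith

lemma exists_occurs_wpow_not_occurs {θ w : List α} (hθ : θ ≠ []) {n p : ℕ}
    (h : Occurs (wpow θ n) w p) :
    ∃ b, Occurs (wpow θ (n + b)) w p ∧ ¬ Occurs θ w (p + (n + b) * θ.length) := by
  by_contra! hext
  have hall : ∀ b, Occurs (wpow θ (n + b)) w p := by
    intro b
    induction b with
    | zero => exact h
    | succ b ih =>
      have hocc := ih.append (by simpa using hext b ih)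
      rwa [← Nat.add_assoc, wpow_add θ _ 1, wpow_one]
  have hlen := (hall (w.length + 1)).length_le
  rw [length_wpow] at hlen
  have : w.length + 1 ≤ (n + (w.length + 1)) * θ.length :=
    (Nat.le_add_left _ n).trans (Nat.le_mul_of_pos_right _ (List.length_pos_iff.mpr hθ))
  omega

end Words

theorem stmt2 {α : Type*} (w y : List α) (hy : y ≠ []) (s : ℕ)
    (h : Occurs (y ++ y) w s) :
    ∃ (p : ℕ) (θ : List α) (e : ℕ), MaxLocalPower w p θ e ∧
      ∃ i j : ℕ, 1 ≤ j ∧ y = wpow θ j ∧ s = p + i * θ.length ∧ i + 2 * j ≤ e := by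
  obtain ⟨θ, j, hθ, hj, rfl⟩ := exists_primitive_wpow_eq hy
  have hrun : Occurs (wpow θ (2 * j)) w s := by rwa [Nat.two_mul, wpow_add]
  have hs : s ≤ w.length := by
    have := h.length_le
    have := List.length_pos_iff.mpr hy
    simp only [List.length_append] at *
    omega
  obtain ⟨i, his, hleft, hnotleft⟩ := exists_occurs_wpow_not_isSuffix_take hθ.1 hs hrun
  obtain ⟨b, hrun', hnotright⟩ := exists_occurs_wpow_not_occurs hθ.1 hleft
  exact ⟨s - i * θ.length, θ, i + 2 * j + b, ⟨hθ, by omega, hrun', hnotleft, hnotright⟩,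
    i, j, hj, rfl, by omega, by omega⟩
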